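/- For every u ∈ ℝ and z ∈ ℂ, setting τ = u⁶/3 and c = 3u(u+1)(u²−u+1), the identity 4(3z⁴ − 3z − c)³ − 27(−2z⁶ + 3z³ + cz² − 3τ)² = −27(u+z)²·q(z) holds, where q(z) = (4u⁶−3)z⁴ − (8u⁷+6u⁴)z³ + (9u⁸+6u⁵)z² − (10u⁹+12u⁶−4)z + 5u¹⁰ + 12u⁷ + 12u⁴ + 4u. Moreover q(−u) = 9u⁴(2u³+1)², and the discriminant of q as a quartic in z equals −6912(u³+1)⁶(10u³+9)(3u⁶+1)³. -/
import Mathlib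


noncomputable section

/-- The quartic `q` from the genus-1 analysis, with parameter `u`. -/
def qq (u : ℝ) (z : ℂ) : ℂ :=
  ((4 * u ^ 6 - 3 : ℝ) : ℂ) * z ^ 4 - ((8 * u ^ 7 + 6 * u ^ 4 : ℝ) : ℂ) * z ^ 3
    + ((9 * u ^ 8 + 6 * u ^ 5 : ℝ) : ℂ) * z ^ 2
    - ((10 * u ^ 9 + 12 * u ^ 6 - 4 : ℝ) : ℂ) * z
    + ((5 * u ^ 10 + 12 * u ^ 7 + 12 * u ^ 4 + 4 * u : ℝ) : ℂ)

/-- The discriminant of the quartic `a z⁴ + b z³ + c z² + d z + e` (standard formula). -/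
def quarticDisc (a b c d e : ℂ) : ℂ :=
  256 * a ^ 3 * e ^ 3 - 192 * a ^ 2 * b * d * e ^ 2 - 128 * a ^ 2 * c ^ 2 * e ^ 2
    + 144 * a ^ 2 * c * d ^ 2 * e - 27 * a ^ 2 * d ^ 4 + 144 * a * b ^ 2 * c * e ^ 2
    - 6 * a * b ^ 2 * d ^ 2 * e - 80 * a * b * c ^ 2 * d * e + 18 * a * b * c * d ^ 3
    + 16 * a * c ^ 4 * e - 4 * a * c ^ 3 * d ^ 2 - 27 * b ^ 4 * e ^ 2
    + 18 * b ^ 3 * c * d * e - 4 * b ^ 3 * d ^ 3 - 4 * b ^ 2 * c ^ 3 * e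
    + b ^ 2 * c ^ 2 * d ^ 2

/-- For every `u ∈ ℝ`, with `τ = u⁶/3` and `c = 3u(u+1)(u²−u+1)`:
`4R³ − 27D² = −27(u+z)²·q(z)`; `q(−u) = 9u⁴(2u³+1)²`; and the discriminant of `q` as a
quartic in `z` equals `−6912(u³+1)⁶(10u³+9)(3u⁶+1)³`. -/
theorem genus_one_discriminant (u : ℝ) :
    (∀ z : ℂ,
      4 * (3 * z ^ 4 - 3 * z - ((3 * u * (u + 1) * (u ^ 2 - u + 1) : ℝ) : ℂ)) ^ 3
        - 27 * (-2 * z ^ 6 + 3 * z ^ 3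
            + ((3 * u * (u + 1) * (u ^ 2 - u + 1) : ℝ) : ℂ) * z ^ 2
            - 3 * ((u ^ 6 / 3 : ℝ) : ℂ)) ^ 2
      = -27 * ((u : ℂ) + z) ^ 2 * qq u z) ∧
    qq u (-(u : ℂ)) = ((9 * u ^ 4 * (2 * u ^ 3 + 1) ^ 2 : ℝ) : ℂ) ∧
    quarticDisc ((4 * u ^ 6 - 3 : ℝ) : ℂ) (-((8 * u ^ 7 + 6 * u ^ 4 : ℝ) : ℂ))
        ((9 * u ^ 8 + 6 * u ^ 5 : ℝ) : ℂ) (-((10 * u ^ 9 + 12 * u ^ 6 - 4 : ℝ) : ℂ))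
        ((5 * u ^ 10 + 12 * u ^ 7 + 12 * u ^ 4 + 4 * u : ℝ) : ℂ)
      = ((-6912 * (u ^ 3 + 1) ^ 6 * (10 * u ^ 3 + 9) * (3 * u ^ 6 + 1) ^ 3 : ℝ) : ℂ) := by
  refine ⟨fun z => ?_, ?_, ?_⟩ <;> simp only [qq, quarticDisc] <;> push_cast <;> ring
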